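/- With Z the localization of V along an ambidextrous natural transformation T, and I : V → Z the canonical functor (given by the p = 0 term of the colimit), the image I(T_M) of each component T_M is an isomorphism in Z. More generally, each I(T^p_M) is an isomorphism, with inverse given by the image of the identity of F^p(M) in Hom_Z(M, F^p(M)). -/

import Mathlib

open CategoryTheory

namespace Stmt3

variable {V : Type*} [Category V]

/-- Iterates `F^p` of an endofunctor. -/
def Fpow (F : V ⥤ V) : ℕ → (V ⥤ V)
  | 0 => 𝟭 V
  | n + 1 => F ⋙ Fpow F n

lemma Fpow_obj_add (F : V ⥤ V) (p q : ℕ) (M : V) :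
    (Fpow F (p + q)).obj M = (Fpow F p).obj ((Fpow F q).obj M) := by
  induction q generalizing M with
  | zero => rfl
  | succ q ih => exact ih (F.obj M)

/-- Iterates `T^p : F^p ⟶ 𝟭`. -/
def Tpow (F : V ⥤ V) (T : F ⟶ 𝟭 V) : ∀ (p : ℕ) (M : V), (Fpow F p).obj M ⟶ M
  | 0, M => 𝟙 M
  | p + 1, M => Tpow F T p (F.obj M) ≫ T.app M

/-- The connecting map of the direct system: extend `f : F^p(M) ⟶ N` to `F^{p+r}(M) ⟶ N`
by precomposing with `F^p(T^r_M)`. -/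
def ext (F : V ⥤ V) (T : F ⟶ 𝟭 V) {M N : V} (p r : ℕ) (f : (Fpow F p).obj M ⟶ N) :
    (Fpow F (p + r)).obj M ⟶ N :=
  eqToHom (Fpow_obj_add F p r M) ≫ (Fpow F p).map (Tpow F T r M) ≫ f

/-- The relation generating the colimit `Hom_Z(M,N) = colim_p Hom_V(F^p(M), N)`. -/
def ZHomRel (F : V ⥤ V) (T : F ⟶ 𝟭 V) (M N : V) :
    (Σ p : ℕ, (Fpow F p).obj M ⟶ N) → (Σ p : ℕ, (Fpow F p).obj M ⟶ N) → Prop :=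
  fun x y => ∃ r : ℕ, y = ⟨x.1 + r, ext F T x.1 r x.2⟩

/-- `Hom_Z(M,N) = colim_p Hom_V(F^p(M), N)`, morphisms in the localization of `V` along `T`. -/
def ZHom (F : V ⥤ V) (T : F ⟶ 𝟭 V) (M N : V) : Type _ :=
  Quot (ZHomRel F T M N)

/-- Composition at the level of representatives: for `f : F^p(M) ⟶ N` and `g : F^q(N) ⟶ O`,
the composite is `g ∘ F^q(f) : F^{p+q}(M) ⟶ O`. -/
def zcomp (F : V ⥤ V) {M N O : V} {p q : ℕ}
    (f : (Fpow F p).obj M ⟶ N) (g : (Fpow F q).obj N ⟶ O) :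
    (Fpow F (p + q)).obj M ⟶ O :=
  eqToHom (by rw [Nat.add_comm]; exact Fpow_obj_add F q p M) ≫ (Fpow F q).map f ≫ g


lemma Fpow_obj_comm1 (F : V ⥤ V) (q : ℕ) (M : V) :
    (Fpow F q).obj (F.obj M) = F.obj ((Fpow F q).obj M) := by
  induction q generalizing M with
  | zero => rfl
  | succ q ih => exact ih (F.obj M)

lemma Fpow_obj_comm (F : V ⥤ V) (p q : ℕ) (M : V) :
    (Fpow F q).obj ((Fpow F p).obj M) = (Fpow F p).obj ((Fpow F q).obj M) := by
  rw [← Fpow_obj_add, Nat.add_comm, Fpow_obj_add]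

lemma Tpow_Fobj (F : V ⥤ V) (T : F ⟶ 𝟭 V)
    (amb : ∀ M : V, T.app (F.obj M) = F.map (T.app M)) :
    ∀ (q : ℕ) (M : V),
      Tpow F T q (F.obj M) = eqToHom (Fpow_obj_comm1 F q M) ≫ F.map (Tpow F T q M)
  | 0, M => (by simp :
      (𝟙 (F.obj M) : F.obj M ⟶ F.obj M) = eqToHom rfl ≫ F.map (𝟙 M))
  | q + 1, M => by
    show Tpow F T q (F.obj (F.obj M)) ≫ T.app (F.obj M) = _
    rw [Tpow_Fobj F T amb q (F.obj M), amb M]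
    show _ = eqToHom _ ≫ F.map (Tpow F T q (F.obj M) ≫ T.app M)
    rw [F.map_comp, Category.assoc]

lemma Tpow_Fpow_obj (F : V ⥤ V) (T : F ⟶ 𝟭 V)
    (amb : ∀ M : V, T.app (F.obj M) = F.map (T.app M)) (p q : ℕ) (M : V) :
    Tpow F T q ((Fpow F p).obj M) =
      eqToHom (Fpow_obj_comm F p q M) ≫ (Fpow F p).map (Tpow F T q M) := by
  induction p generalizing M with
  | zero =>
    simp [Fpow]
    exact (Category.id_comp _).symm
  | succ p ih =>
    show Tpow F T q ((Fpow F p).obj (F.obj M)) = _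
    rw [ih (F.obj M), Tpow_Fobj F T amb q M]
    show _ = eqToHom _ ≫ (Fpow F p).map (F.map (Tpow F T q M))
    rw [Functor.map_comp, eqToHom_map]
    simp

/-- in the localization `Z` of `V` along an ambidextrous `T`, the image
`I(T^p_M)` of each iterate of `T` under the canonical functor `I : V ⥤ Z` is an isomorphism:
its two-sided inverse is the image of the identity of `F^p(M)` in `Hom_Z(M, F^p(M))`.
(The case `p = 1` says each `I(T_M)` is an isomorphism.)
Here `I(T^p_M)` is the class of `⟨0, T^p_M⟩` in `ZHom (F^p M) M`, the candidate inverse is the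
class of `⟨p, 𝟙 (F^p M)⟩` in `ZHom M (F^p M)`, and the two composites (computed by `zcomp`)
are the respective identities. -/
theorem I_Tpow_isIso (F : V ⥤ V) (T : F ⟶ 𝟭 V)
    (amb : ∀ M : V, T.app (F.obj M) = F.map (T.app M)) (M : V) (p : ℕ) :
    (Quot.mk (ZHomRel F T M M)
        ⟨p + 0, zcomp F (𝟙 ((Fpow F p).obj M)) (Tpow F T p M)⟩ =
      Quot.mk (ZHomRel F T M M) ⟨0, 𝟙 M⟩) ∧
    (Quot.mk (ZHomRel F T ((Fpow F p).obj M) ((Fpow F p).obj M))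
        ⟨0 + p, zcomp F (Tpow F T p M) (𝟙 ((Fpow F p).obj M))⟩ =
      Quot.mk (ZHomRel F T ((Fpow F p).obj M) ((Fpow F p).obj M))
        ⟨0, 𝟙 ((Fpow F p).obj M)⟩) := by
  constructor
  · refine (Quot.sound ⟨p, ?_⟩).symm
    refine Sigma.ext (Nat.add_comm p 0) ?_
    refine (conj_eqToHom_iff_heq _ _
      (congrArg (fun n => (Fpow F n).obj M) (Nat.add_comm p 0)) rfl).mp ?_
    simp [zcomp, ext, Fpow]
    erw [eqToHom_trans_assoc]
  · refine (Quot.sound ⟨p, ?_⟩).symm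
    refine Sigma.ext rfl (heq_of_eq ?_)
    show zcomp F (M := (Fpow F p).obj M) (p := 0) (q := p)
        (Tpow F T p M) (𝟙 ((Fpow F p).obj M)) = ext F T 0 p (𝟙 ((Fpow F p).obj M))
    rw [show ext F T 0 p (𝟙 ((Fpow F p).obj M)) = eqToHom (Fpow_obj_add F 0 p _) ≫
      Tpow F T p ((Fpow F p).obj M) ≫ 𝟙 _ from rfl, Tpow_Fpow_obj F T amb p p M]
    simp [zcomp]
    erw [Category.comp_id]
    rfl

end Stmt3
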